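/- Let m < 0 be an integer. If u : (0,∞) → ℂ is continuously differentiable with finite mass M[u] < ∞ and finite norm ‖u‖_{Ḣ¹_m} < ∞, and u solves the Bogomol'nyi equation ∂_r u(r) = ((m + A_θ[u](r))/r) u(r) for all r > 0, then u is identically zero. In particular, there is no nontrivial finite-energy Jackiw–Pi vortex with negative equivariance index. -/

import Mathlib

open MeasureTheory Set

/-- `A_θ[ψ](r) = -(1/2)∫₀^r |ψ(r')|² r' dr'`. -/
noncomputable def Atheta (ψ : ℝ → ℂ) (r : ℝ) : ℝ :=
  -(1/2) * ∫ t in (0:ℝ)..r, ‖ψ t‖ ^ 2 * t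

/-! For `m < 0` the Bogomol'nyi equation gives `r ∂_r u = (m + A_θ) u` with `m + A_θ ≤ -1`,
so `r² |u|²` is nonincreasing on `(0,∞)`. If `u(r₀) ≠ 0`, then `|u(r)|² r ≥ r₀² |u(r₀)|² / r`
for `r < r₀`, and `1/r` is not integrable at `0`, contradicting finite mass. -/

lemma Atheta_nonpos (ψ : ℝ → ℂ) {r : ℝ} (hr : 0 ≤ r) : Atheta ψ r ≤ 0 := by
  have h : 0 ≤ ∫ t in (0:ℝ)..r, ‖ψ t‖ ^ 2 * t :=
    intervalIntegral.integral_nonneg hr fun t ht => mul_nonneg (by positivity) ht.1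
  unfold Atheta
  linarith

lemma hasDerivAt_norm_sq_of_hasDerivAt_real_mul {u : ℝ → ℂ} {c r : ℝ}
    (hu : HasDerivAt u ((c : ℂ) * u r) r) :
    HasDerivAt (fun s => ‖u s‖ ^ 2) (2 * c * ‖u r‖ ^ 2) r := by
  have h := hu.norm_sq
  rwa [← Complex.real_smul, real_inner_smul_right, real_inner_self_eq_norm_sq, ← mul_assoc] at h

lemma antitoneOn_sq_mul_norm_sq {u : ℝ → ℂ} {c : ℝ → ℝ}
    (hu : ∀ r ∈ Ioi (0:ℝ), HasDerivAt u ((c r : ℂ) * u r) r)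
    (hc : ∀ r ∈ Ioi (0:ℝ), r * c r ≤ -1) :
    AntitoneOn (fun r => r ^ 2 * ‖u r‖ ^ 2) (Ioi 0) := by
  have hderiv : ∀ r ∈ Ioi (0:ℝ), HasDerivAt (fun r => r ^ 2 * ‖u r‖ ^ 2)
      (2 * r * (1 + r * c r) * ‖u r‖ ^ 2) r := by
    intro r hr
    refine ((hasDerivAt_pow 2 r).mul
      (hasDerivAt_norm_sq_of_hasDerivAt_real_mul (hu r hr))).congr_deriv ?_
    push_cast
    ring
  refine antitoneOn_of_hasDerivWithinAt_nonpos (f' := fun r => 2 * r * (1 + r * c r) * ‖u r‖ ^ 2)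
    (convex_Ioi 0)
    (fun r hr => (hderiv r hr).continuousAt.continuousWithinAt) ?_ ?_
  · rw [interior_Ioi]
    exact fun r hr => (hderiv r hr).hasDerivWithinAt
  · rw [interior_Ioi]
    intro r hr
    have hr0 : (0:ℝ) < r := hr
    have hfactor : 1 + r * c r ≤ 0 := by linarith [hc r hr]
    have : 0 ≤ 2 * r * ‖u r‖ ^ 2 := by positivity
    nlinarith

lemma not_integrableOn_Ioo_of_div_le {f : ℝ → ℝ} {K a : ℝ} (hK : 0 < K) (ha : 0 < a)
    (hf : ∀ x ∈ Ioo 0 a, K / x ≤ f x) : ¬ IntegrableOn f (Ioo 0 a) := by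
  intro hint
  have hinv : IntegrableOn (fun x : ℝ => x⁻¹) (Ioo 0 a) := by
    refine (hint.const_mul K⁻¹).mono' measurable_inv.aestronglyMeasurable ?_
    filter_upwards [ae_restrict_mem measurableSet_Ioo] with x hx
    have hx0 : 0 < x := hx.1
    rw [Real.norm_of_nonneg (inv_nonneg.2 hx0.le), le_inv_mul_iff₀ hK, ← div_eq_mul_inv]
    exact hf x hx
  have : IntervalIntegrable (fun x : ℝ => x⁻¹) volume 0 a :=
    (intervalIntegrable_iff_integrableOn_Ioo_of_le ha.le).2 hinv
  rw [intervalIntegrable_inv_iff] at this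
  rcases this with h | h
  · exact ha.ne h
  · exact h left_mem_uIcc

lemma nonpos_of_antitoneOn_sq_mul_of_integrableOn {g : ℝ → ℝ}
    (hanti : AntitoneOn (fun r => r ^ 2 * g r) (Ioi 0))
    (hint : IntegrableOn (fun r => g r * r) (Ioi 0)) :
    ∀ r ∈ Ioi (0:ℝ), g r ≤ 0 := by
  intro r₀ hr₀
  by_contra! hpos
  have hr₀' : (0:ℝ) < r₀ := hr₀
  refine not_integrableOn_Ioo_of_div_le (K := r₀ ^ 2 * g r₀) (by positivity) hr₀' ?_
    (hint.mono_set Ioo_subset_Ioi_self)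
  intro x hx
  have hx0 : 0 < x := hx.1
  rw [div_le_iff₀ hx0]
  calc r₀ ^ 2 * g r₀ ≤ x ^ 2 * g x := hanti hx0 hr₀ hx.2.le
    _ = g x * x * x := by ring

theorem no_vortex_neg_equiv_general (m : ℤ) (hm : m < 0) (u : ℝ → ℂ)
    (hderiv : ∀ r ∈ Set.Ioi (0:ℝ),
      HasDerivAt u (((((m : ℝ) + Atheta u r) / r : ℝ) : ℂ) * u r) r)
    (hmass : IntegrableOn (fun r => ‖u r‖ ^ 2 * r) (Set.Ioi (0:ℝ))) :
    ∀ r ∈ Set.Ioi (0:ℝ), u r = 0 := by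
  have hcoeff : ∀ r ∈ Ioi (0:ℝ), r * (((m : ℝ) + Atheta u r) / r) ≤ -1 := by
    intro r hr
    have hr0 : (0:ℝ) < r := hr
    have hm1 : (m : ℝ) ≤ -1 := by exact_mod_cast Int.le_sub_one_of_lt hm
    rw [mul_div_cancel₀ _ hr0.ne']
    linarith [Atheta_nonpos u hr0.le]
  have hanti := antitoneOn_sq_mul_norm_sq hderiv hcoeff
  intro r hr
  have hnorm : ‖u r‖ ^ 2 ≤ 0 := nonpos_of_antitoneOn_sq_mul_of_integrableOn hanti hmass r hr
  simpa using hnorm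

/-- Nonexistence of nontrivial finite-energy Jackiw–Pi vortices with negative
equivariance index: if `m < 0`, `u` is `C¹` on `(0,∞)` with finite mass and finite
`Ḣ¹_m` norm, and `u` solves the Bogomol'nyi equation
`∂_r u = ((m + A_θ[u])/r) u` on `(0,∞)`, then `u ≡ 0` on `(0,∞)`. -/
theorem no_vortex_neg_equiv (m : ℤ) (hm : m < 0) (u : ℝ → ℂ)
    (hcont : ContinuousOn u (Set.Ioi (0:ℝ)))
    (hderiv : ∀ r ∈ Set.Ioi (0:ℝ),
      HasDerivAt u (((((m : ℝ) + Atheta u r) / r : ℝ) : ℂ) * u r) r)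
    (hmass : IntegrableOn (fun r => ‖u r‖ ^ 2 * r) (Set.Ioi (0:ℝ)))
    (hH1 : IntegrableOn
      (fun r => (‖deriv u r‖ ^ 2 + ((m : ℝ) ^ 2 / r ^ 2) * ‖u r‖ ^ 2) * r)
      (Set.Ioi (0:ℝ))) :
    ∀ r ∈ Set.Ioi (0:ℝ), u r = 0 :=
  no_vortex_neg_equiv_general m hm u hderiv hmass
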